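/- Let K ≥ 0 and let A(t) = Σ_{ν≥1} A_ν t^ν be a real formal power series with zero constant term whose coefficients satisfy 0 ≤ A_ν ≤ K·M_ν for all ν ≥ 1. Then for every ν ≥ 1 the degree-ν coefficient of exp(A(t)) − 1 is at most λ^{-1}·(e^{Kλ} − 1)·M_ν. -/

import Mathlib

/-!
The sequence `1/ν²` is almost closed under convolution, `∑_{i+j=n} 1/(i²j²) ≤ 8/n²`, so the
majorant satisfies `M(t)² ≪ λ M(t)` coefficientwise. Together with `0 ≪ A ≪ K M` this gives
`A^l ≪ K^l λ^(l-1) M` for `l ≥ 1`, and summing `A^l / l!` over `l ≥ 1` yields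
`exp(A) - 1 ≪ λ⁻¹ (e^{Kλ} - 1) M`.
-/

/-- The exponential `exp(A(t)) = Σ_{l≥0} A(t)^l / l!` of a formal power series, defined
coefficientwise (the sum of coefficients converges trivially when `A` has zero constant
term, since then only the terms with `l ≤ ν` contribute in degree `ν`). -/
noncomputable def pexp (A : PowerSeries ℝ) : PowerSeries ℝ :=
  PowerSeries.mk fun ν => ∑' (l : ℕ), (1 / (Nat.factorial l : ℝ)) * PowerSeries.coeff ν (A ^ l)

open Finset PowerSeries

lemma inv_sq_mul_inv_sq_le {x y : ℝ} (hx : 0 ≤ x) (hy : 0 ≤ y) :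
    (x ^ 2)⁻¹ * (y ^ 2)⁻¹ ≤ 2 * ((x + y) ^ 2)⁻¹ * ((x ^ 2)⁻¹ + (y ^ 2)⁻¹) := by
  rcases hx.eq_or_lt with rfl | hx
  · simp only [ne_eq, OfNat.ofNat_ne_zero, not_false_eq_true, zero_pow, inv_zero, zero_mul]
    positivity
  rcases hy.eq_or_lt with rfl | hy
  · simp only [ne_eq, OfNat.ofNat_ne_zero, not_false_eq_true, zero_pow, inv_zero, mul_zero]
    positivity
  have hdiff : 2 * ((x + y) ^ 2)⁻¹ * ((x ^ 2)⁻¹ + (y ^ 2)⁻¹) - (x ^ 2)⁻¹ * (y ^ 2)⁻¹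
      = (x - y) ^ 2 / ((x + y) ^ 2 * x ^ 2 * y ^ 2) := by
    field_simp
    ring
  rw [← sub_nonneg, hdiff]
  positivity

lemma sum_range_inv_sq_le_two (n : ℕ) : ∑ k ∈ range n, ((k : ℝ) ^ 2)⁻¹ ≤ 2 := by
  rw [range_eq_Ico]
  rcases n with _ | n
  · simp
  rw [← Ioo_insert_left n.succ_pos, sum_insert left_notMem_Ioo]
  simpa using sum_Ioo_inv_sq_le (α := ℝ) 0 (n + 1)

lemma sum_antidiagonal_inv_sq_mul_inv_sq_le (n : ℕ) :
    ∑ p ∈ antidiagonal n, ((p.1 : ℝ) ^ 2)⁻¹ * ((p.2 : ℝ) ^ 2)⁻¹ ≤ 8 * ((n : ℝ) ^ 2)⁻¹ := by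
  have fst : ∑ p ∈ antidiagonal n, ((p.1 : ℝ) ^ 2)⁻¹ = ∑ k ∈ range (n + 1), ((k : ℝ) ^ 2)⁻¹ :=
    Nat.sum_antidiagonal_eq_sum_range_succ_mk (fun p => ((p.1 : ℝ) ^ 2)⁻¹) n
  have snd : ∑ p ∈ antidiagonal n, ((p.2 : ℝ) ^ 2)⁻¹ = ∑ p ∈ antidiagonal n, ((p.1 : ℝ) ^ 2)⁻¹ :=
    Nat.sum_antidiagonal_swap (f := fun p => ((p.1 : ℝ) ^ 2)⁻¹)
  calc ∑ p ∈ antidiagonal n, ((p.1 : ℝ) ^ 2)⁻¹ * ((p.2 : ℝ) ^ 2)⁻¹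
      ≤ ∑ p ∈ antidiagonal n,
          2 * ((n : ℝ) ^ 2)⁻¹ * (((p.1 : ℝ) ^ 2)⁻¹ + ((p.2 : ℝ) ^ 2)⁻¹) := by
        refine sum_le_sum fun p hp => ?_
        rw [← mem_antidiagonal.mp hp, Nat.cast_add]
        exact inv_sq_mul_inv_sq_le p.1.cast_nonneg p.2.cast_nonneg
    _ = 4 * ((n : ℝ) ^ 2)⁻¹ * ∑ k ∈ range (n + 1), ((k : ℝ) ^ 2)⁻¹ := by
        rw [← mul_sum, sum_add_distrib, snd, fst]
        ring
    _ ≤ 4 * ((n : ℝ) ^ 2)⁻¹ * 2 := by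
        gcongr
        exact sum_range_inv_sq_le_two _
    _ = 8 * ((n : ℝ) ^ 2)⁻¹ := by ring

open Nat in
lemma sum_range_pow_succ_div_factorial_le {x : ℝ} (hx : 0 ≤ x) (n : ℕ) :
    ∑ l ∈ range n, x ^ (l + 1) / (l + 1)! ≤ Real.exp x - 1 := by
  have h := Real.sum_le_exp_of_nonneg hx (n + 1)
  rw [sum_range_succ'] at h
  simpa [le_sub_iff_add_le] using h

namespace PowerSeries

section OrderedSemiring

variable {R : Type*} [CommSemiring R] [PartialOrder R] [IsOrderedRing R] {A A' B B' : R⟦X⟧}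

lemma coeff_mul_nonneg (hA : ∀ n, 0 ≤ coeff n A) (hB : ∀ n, 0 ≤ coeff n B) (n : ℕ) :
    0 ≤ coeff n (A * B) := by
  rw [coeff_mul]
  exact sum_nonneg fun p _ => mul_nonneg (hA p.1) (hB p.2)

lemma coeff_pow_nonneg (hA : ∀ n, 0 ≤ coeff n A) (l n : ℕ) : 0 ≤ coeff n (A ^ l) := by
  induction l generalizing n with
  | zero => rw [pow_zero, coeff_one]; split_ifs <;> simp
  | succ l ih => rw [pow_succ]; exact coeff_mul_nonneg ih hA n

lemma coeff_mul_le_coeff_mul (hA : ∀ n, 0 ≤ coeff n A) (hAA' : ∀ n, coeff n A ≤ coeff n A')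
    (hB : ∀ n, 0 ≤ coeff n B) (hBB' : ∀ n, coeff n B ≤ coeff n B') (n : ℕ) :
    coeff n (A * B) ≤ coeff n (A' * B') := by
  rw [coeff_mul, coeff_mul]
  exact sum_le_sum fun p _ =>
    mul_le_mul (hAA' p.1) (hBB' p.2) (hB p.2) ((hA p.1).trans (hAA' p.1))

lemma coeff_pow_le_coeff_pow (hA : ∀ n, 0 ≤ coeff n A) (hAB : ∀ n, coeff n A ≤ coeff n B)
    (l n : ℕ) : coeff n (A ^ l) ≤ coeff n (B ^ l) := by
  induction l generalizing n with
  | zero => rfl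
  | succ l ih =>
    rw [pow_succ, pow_succ]
    exact coeff_mul_le_coeff_mul (coeff_pow_nonneg hA l) ih hA hAB n

lemma coeff_pow_succ_le_of_coeff_sq_le {lam : R} (hlam : 0 ≤ lam) (hB : ∀ n, 0 ≤ coeff n B)
    (hsq : ∀ n, coeff n (B ^ 2) ≤ lam * coeff n B) (l n : ℕ) :
    coeff n (B ^ (l + 1)) ≤ lam ^ l * coeff n B := by
  induction l generalizing n with
  | zero => simp
  | succ l ih =>
    have hle : ∀ n, coeff n (B ^ (l + 1)) ≤ coeff n (C (lam ^ l) * B) := by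
      simpa only [coeff_C_mul] using ih
    calc coeff n (B ^ (l + 1 + 1)) ≤ coeff n (C (lam ^ l) * B * B) := by
          rw [pow_succ]
          exact coeff_mul_le_coeff_mul (coeff_pow_nonneg hB _) hle hB (fun _ => le_rfl) n
      _ = lam ^ l * coeff n (B ^ 2) := by rw [mul_assoc, ← sq, coeff_C_mul]
      _ ≤ lam ^ (l + 1) * coeff n B := by
          rw [pow_succ lam l, mul_assoc]
          exact mul_le_mul_of_nonneg_left (hsq n) (pow_nonneg hlam l)

lemma coeff_pow_succ_le_of_le_smul {K lam : R} (hK : 0 ≤ K) (hlam : 0 ≤ lam)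
    (hB : ∀ n, 0 ≤ coeff n B) (hsq : ∀ n, coeff n (B ^ 2) ≤ lam * coeff n B)
    (hA : ∀ n, 0 ≤ coeff n A) (hAB : ∀ n, coeff n A ≤ K * coeff n B) (l n : ℕ) :
    coeff n (A ^ (l + 1)) ≤ K ^ (l + 1) * lam ^ l * coeff n B := by
  have hAB' : ∀ n, coeff n A ≤ coeff n (C K * B) := by simpa only [coeff_C_mul] using hAB
  calc coeff n (A ^ (l + 1)) ≤ coeff n ((C K * B) ^ (l + 1)) :=
        coeff_pow_le_coeff_pow hA hAB' _ n
    _ = K ^ (l + 1) * coeff n (B ^ (l + 1)) := by rw [mul_pow, ← map_pow, coeff_C_mul]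
    _ ≤ K ^ (l + 1) * (lam ^ l * coeff n B) :=
        mul_le_mul_of_nonneg_left (coeff_pow_succ_le_of_coeff_sq_le hlam hB hsq l n)
          (pow_nonneg hK _)
    _ = K ^ (l + 1) * lam ^ l * coeff n B := (mul_assoc _ _ _).symm

end OrderedSemiring

lemma coeff_pow_eq_zero_of_lt {R : Type*} [CommSemiring R] {A : R⟦X⟧}
    (hA0 : constantCoeff A = 0) {n l : ℕ} (hnl : n < l) : coeff n (A ^ l) = 0 :=
  coeff_of_lt_order _
    ((Nat.cast_lt.mpr hnl).trans_le (le_order_pow_of_constantCoeff_eq_zero l hA0))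

open Nat in
lemma coeff_pexp_sub_one {A : ℝ⟦X⟧} (hA0 : constantCoeff A = 0) {ν : ℕ} (hν : ν ≠ 0) :
    coeff ν (pexp A - 1) = ∑ l ∈ range ν, coeff ν (A ^ (l + 1)) / (l + 1)! := by
  have hfinite : coeff ν (pexp A) = ∑ l ∈ range (ν + 1), 1 / (l ! : ℝ) * coeff ν (A ^ l) := by
    rw [pexp, coeff_mk]
    refine tsum_eq_sum fun l hl => ?_
    rw [coeff_pow_eq_zero_of_lt hA0 (by simpa using hl), mul_zero]
  rw [map_sub, hfinite, sum_range_succ', coeff_one, if_neg hν]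
  simp [div_eq_inv_mul, hν]

open Nat in
lemma coeff_pexp_sub_one_le {A B : ℝ⟦X⟧} {K lam : ℝ} (hK : 0 ≤ K) (hlam : 0 < lam)
    (hB : ∀ n, 0 ≤ coeff n B) (hsq : ∀ n, coeff n (B ^ 2) ≤ lam * coeff n B)
    (hA0 : constantCoeff A = 0) (hA : ∀ n, 0 ≤ coeff n A)
    (hAB : ∀ n, coeff n A ≤ K * coeff n B) {ν : ℕ} (hν : ν ≠ 0) :
    coeff ν (pexp A - 1) ≤ lam⁻¹ * (Real.exp (K * lam) - 1) * coeff ν B := by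
  rw [coeff_pexp_sub_one hA0 hν]
  calc ∑ l ∈ range ν, coeff ν (A ^ (l + 1)) / (l + 1)!
      ≤ ∑ l ∈ range ν, (K * lam) ^ (l + 1) / (l + 1)! * (lam⁻¹ * coeff ν B) := by
        refine sum_le_sum fun l _ => ?_
        have hpow := coeff_pow_succ_le_of_le_smul hK hlam.le hB hsq hA hAB l ν
        calc coeff ν (A ^ (l + 1)) / (l + 1)!
            ≤ K ^ (l + 1) * lam ^ l * coeff ν B / (l + 1)! := by gcongr
          _ = (K * lam) ^ (l + 1) / (l + 1)! * (lam⁻¹ * coeff ν B) := by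
              field_simp
              ring
    _ = (∑ l ∈ range ν, (K * lam) ^ (l + 1) / (l + 1)!) * (lam⁻¹ * coeff ν B) := by
        rw [sum_mul]
    _ ≤ (Real.exp (K * lam) - 1) * (lam⁻¹ * coeff ν B) := by
        gcongr
        · exact mul_nonneg (inv_nonneg.mpr hlam.le) (hB ν)
        · exact sum_range_pow_succ_div_factorial_le (by positivity) ν
    _ = lam⁻¹ * (Real.exp (K * lam) - 1) * coeff ν B := by ring

/-- The `ν = 0` coefficient vanishes because `(0 : ℝ)⁻¹ = 0`. -/
noncomputable def kodairaSpencerMajorant (c : ℝ) : ℝ⟦X⟧ :=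
  mk fun ν => (16 * c)⁻¹ * c ^ ν * ((ν : ℝ) ^ 2)⁻¹

lemma coeff_kodairaSpencerMajorant_nonneg {c : ℝ} (hc : 0 < c) (n : ℕ) :
    0 ≤ coeff n (kodairaSpencerMajorant c) := by
  rw [kodairaSpencerMajorant, coeff_mk]
  positivity

lemma coeff_kodairaSpencerMajorant_sq_le {c : ℝ} (hc : 0 < c) (n : ℕ) :
    coeff n (kodairaSpencerMajorant c ^ 2) ≤ c⁻¹ * coeff n (kodairaSpencerMajorant c) := by
  have hconv : coeff n (kodairaSpencerMajorant c ^ 2) =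
      (16 * c)⁻¹ ^ 2 * c ^ n * ∑ p ∈ antidiagonal n, ((p.1 : ℝ) ^ 2)⁻¹ * ((p.2 : ℝ) ^ 2)⁻¹ := by
    rw [sq, coeff_mul, mul_sum]
    refine sum_congr rfl fun p hp => ?_
    rw [kodairaSpencerMajorant, coeff_mk, coeff_mk, ← mem_antidiagonal.mp hp, pow_add]
    ring
  rw [hconv, kodairaSpencerMajorant, coeff_mk]
  calc (16 * c)⁻¹ ^ 2 * c ^ n * ∑ p ∈ antidiagonal n, ((p.1 : ℝ) ^ 2)⁻¹ * ((p.2 : ℝ) ^ 2)⁻¹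
      ≤ (16 * c)⁻¹ ^ 2 * c ^ n * (8 * ((n : ℝ) ^ 2)⁻¹) := by
        gcongr
        exact sum_antidiagonal_inv_sq_mul_inv_sq_le n
    _ = (2 * c)⁻¹ * (16 * c)⁻¹ * c ^ n * ((n : ℝ) ^ 2)⁻¹ := by
        field_simp
        ring
    _ ≤ c⁻¹ * ((16 * c)⁻¹ * c ^ n * ((n : ℝ) ^ 2)⁻¹) := by
        rw [← mul_assoc, ← mul_assoc]
        gcongr
        linarith

end PowerSeries

/-- Fix `c > 0`, `λ = 1/c`, and `M ν = (1/(16c))·c^ν/ν²`. Let `K ≥ 0`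
and let `A(t) = Σ_{ν≥1} A_ν t^ν` be a real formal power series with zero constant term
whose coefficients satisfy `0 ≤ A_ν ≤ K·M_ν` for all `ν ≥ 1`. Then for every `ν ≥ 1` the
degree-`ν` coefficient of `exp(A(t)) − 1` is at most `λ⁻¹·(e^{Kλ} − 1)·M ν`. -/
theorem stmt_4 (c lam K : ℝ) (hc : 0 < c) (hlam : lam = 1 / c) (hK : 0 ≤ K)
    (M : ℕ → ℝ) (hM : ∀ ν : ℕ, M ν = 1 / (16 * c) * c ^ ν / (ν : ℝ) ^ 2)
    (A : PowerSeries ℝ) (hA0 : PowerSeries.constantCoeff A = 0)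
    (hAnonneg : ∀ ν : ℕ, 1 ≤ ν → 0 ≤ PowerSeries.coeff ν A)
    (hAle : ∀ ν : ℕ, 1 ≤ ν → PowerSeries.coeff ν A ≤ K * M ν) :
    ∀ ν : ℕ, 1 ≤ ν →
      PowerSeries.coeff ν (pexp A - 1) ≤ lam⁻¹ * (Real.exp (K * lam) - 1) * M ν := by
  have hMcoeff : ∀ ν, M ν = coeff ν (kodairaSpencerMajorant c) := fun ν => by
    rw [hM, kodairaSpencerMajorant, coeff_mk]
    ring
  have hA : ∀ n, 0 ≤ coeff n A
    | 0 => by rw [coeff_zero_eq_constantCoeff_apply, hA0]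
    | n + 1 => hAnonneg (n + 1) n.succ_pos
  have hAB : ∀ n, coeff n A ≤ K * coeff n (kodairaSpencerMajorant c)
    | 0 => by simp [coeff_zero_eq_constantCoeff_apply, hA0, kodairaSpencerMajorant]
    | n + 1 => hMcoeff (n + 1) ▸ hAle (n + 1) n.succ_pos
  intro ν hν
  rw [hMcoeff, hlam, one_div]
  exact coeff_pexp_sub_one_le hK (inv_pos.mpr hc) (coeff_kodairaSpencerMajorant_nonneg hc)
    (coeff_kodairaSpencerMajorant_sq_le hc) hA0 hA hAB (Nat.one_le_iff_ne_zero.mp hν)
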